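/- FX inverse-query value identity (from the proof of Lemma 11 of the paper): Fix y_{j+1} ∈ V with y_{j+1} ∉ {y₁, …, y_j} and s ∈ V with s ∉ {y₁ ⊕ k₂, …, y_j ⊕ k₂}. Let E' be the permutation of V determined by E'⁻¹ = E⁻¹ ∘ swap(y_{j+1} ⊕ k₂, s), and define E'^{T_r} by the same recursion with E replaced by E'. Then (E'^{T_j})⁻¹(y_{j+1} ⊕ k₂) = (E^{T_j})⁻¹(s); equivalently, the inverse FX oracle built from E'^{T_j} answers the (j+1)st inverse query y_{j+1} with (E'^{T_j})⁻¹(y_{j+1} ⊕ k₂) ⊕ k₁ = (E^{T_j})⁻¹(s) ⊕ k₁. -/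

import Mathlib

/-!
Write `σ = swap(y_{j+1} ⊕ k₂, s)`, so that `E' = σ ∘ E`. Since `σ` fixes every programmed output
`y_i ⊕ k₂` (`i ≤ j`), it commutes through each reprogramming step:
`swap(σ u, y_i ⊕ k₂) ∘ σ = σ ∘ swap(u, y_i ⊕ k₂)`. Hence `E'^{T_r} = σ ∘ E^{T_r}` for all `r ≤ j`,
and `(E'^{T_j})⁻¹(y_{j+1} ⊕ k₂) = (E^{T_j})⁻¹(σ (y_{j+1} ⊕ k₂)) = (E^{T_j})⁻¹(s)`.
-/

/-- The reprogrammed permutations `E^{T_i}` of the FX hybrid argument: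
`E^{T_0} = E` and `E^{T_i} = swap(E^{T_{i-1}}(x_i ⊕ k₁), y_i ⊕ k₂) ∘ E^{T_{i-1}}`. -/
def fxReprog {V : Type*} [DecidableEq V] [Add V]
    (E : Equiv.Perm V) (k₁ k₂ : V) (x y : ℕ → V) : ℕ → Equiv.Perm V
  | 0 => E
  | i + 1 =>
      Equiv.swap (fxReprog E k₁ k₂ x y i (x (i + 1) + k₁)) (y (i + 1) + k₂) *
        fxReprog E k₁ k₂ x y i

open Equiv

theorem fxReprog_mul_left {V : Type*} [DecidableEq V] [Add V]
    (σ E : Perm V) (k₁ k₂ : V) (x y : ℕ → V) (r : ℕ)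
    (hσ : ∀ i, 1 ≤ i → i ≤ r → σ (y i + k₂) = y i + k₂) :
    fxReprog (σ * E) k₁ k₂ x y r = σ * fxReprog E k₁ k₂ x y r := by
  induction r with
  | zero => rfl
  | succ r ih =>
    have ih' := ih fun i hi hir => hσ i hi (Nat.le_succ_of_le hir)
    have hfix : σ (y (r + 1) + k₂) = y (r + 1) + k₂ := hσ (r + 1) r.succ_pos le_rfl
    have hcomm := mul_swap_eq_swap_mul σ (fxReprog E k₁ k₂ x y r (x (r + 1) + k₁))
      (y (r + 1) + k₂)
    rw [hfix] at hcomm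
    rw [fxReprog, fxReprog, ih', Perm.mul_apply, ← mul_assoc, ← hcomm, mul_assoc]

theorem fx_inverse_query_value_general {n j : ℕ}
    (E : Equiv.Perm (Fin n → ZMod 2)) (k₁ k₂ : Fin n → ZMod 2)
    (x y : ℕ → Fin n → ZMod 2) (s : Fin n → ZMod 2)
    (hyj : ∀ i, 1 ≤ i → i ≤ j → y (j + 1) ≠ y i)
    (hs : ∀ i, 1 ≤ i → i ≤ j → s ≠ y i + k₂)
    (E' : Equiv.Perm (Fin n → ZMod 2))
    (hE' : E'⁻¹ = E⁻¹ * Equiv.swap (y (j + 1) + k₂) s) :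
    (fxReprog E' k₁ k₂ x y j)⁻¹ (y (j + 1) + k₂) = (fxReprog E k₁ k₂ x y j)⁻¹ s ∧
    (fxReprog E' k₁ k₂ x y j)⁻¹ (y (j + 1) + k₂) + k₁ =
        (fxReprog E k₁ k₂ x y j)⁻¹ s + k₁ := by
  have hE'_eq : E' = swap (y (j + 1) + k₂) s * E := by
    rw [← inv_inv E', hE', mul_inv_rev, swap_inv, inv_inv]
  have hfix : ∀ i, 1 ≤ i → i ≤ j →
      swap (y (j + 1) + k₂) s (y i + k₂) = y i + k₂ := fun i hi hij =>
    swap_apply_of_ne_of_ne (fun h => hyj i hi hij (add_right_cancel h).symm) (hs i hi hij).symm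
  have hvalue : (fxReprog E' k₁ k₂ x y j)⁻¹ (y (j + 1) + k₂) = (fxReprog E k₁ k₂ x y j)⁻¹ s := by
    rw [hE'_eq, fxReprog_mul_left _ _ _ _ _ _ _ hfix, mul_inv_rev, swap_inv, Perm.mul_apply,
      swap_apply_left]
  exact ⟨hvalue, congrArg (· + k₁) hvalue⟩

/-- FX inverse-query value identity (from the proof of Lemma 11): for a fresh
inverse query `y_{j+1}` and resampling point `s ∉ {y₁ ⊕ k₂, …, y_j ⊕ k₂}`, with
`E'⁻¹ = E⁻¹ ∘ swap(y_{j+1} ⊕ k₂, s)`, one has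
`(E'^{T_j})⁻¹(y_{j+1} ⊕ k₂) = (E^{T_j})⁻¹(s)`; equivalently, the inverse FX
oracle built from `E'^{T_j}` answers the `(j+1)`st inverse query with
`(E'^{T_j})⁻¹(y_{j+1} ⊕ k₂) ⊕ k₁ = (E^{T_j})⁻¹(s) ⊕ k₁`. -/
theorem fx_inverse_query_value {n j : ℕ} (hn : 1 ≤ n)
    (E : Equiv.Perm (Fin n → ZMod 2)) (k₁ k₂ : Fin n → ZMod 2)
    (x y : ℕ → Fin n → ZMod 2) (s : Fin n → ZMod 2)
    (hyj : ∀ i, 1 ≤ i → i ≤ j → y (j + 1) ≠ y i)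
    (hs : ∀ i, 1 ≤ i → i ≤ j → s ≠ y i + k₂)
    (E' : Equiv.Perm (Fin n → ZMod 2))
    (hE' : E'⁻¹ = E⁻¹ * Equiv.swap (y (j + 1) + k₂) s) :
    (fxReprog E' k₁ k₂ x y j)⁻¹ (y (j + 1) + k₂) = (fxReprog E k₁ k₂ x y j)⁻¹ s ∧
    (fxReprog E' k₁ k₂ x y j)⁻¹ (y (j + 1) + k₂) + k₁ =
        (fxReprog E k₁ k₂ x y j)⁻¹ s + k₁ :=
  fx_inverse_query_value_general E k₁ k₂ x y s hyj hs E' hE'
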